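/- There do not exist real numbers a₁, a₂, a₃, b₁, b₂, b₃, c₁, c₂, c₃ satisfying simultaneously: b₁ = a₂, c₂ = b₃, a₃ = c₁, a₃b₂ − a₂b₃ = 0, b₂c₁ − b₁c₂ = 0, a₁c₂ − a₂c₁ = 0, a₁b₃ − a₃b₁ = 0, b₁c₃ − b₃c₁ = 0, a₂c₃ − a₃c₂ = 0, b₂c₃ − b₃c₂ = −1, a₁b₂ − a₂b₁ = −1, and a₁c₃ − a₃c₁ = −1. -/
import Mathlib


/-- **Proposition 3.7 (algebraic core).** There are no real numbers
`a₁, a₂, a₃, b₁, b₂, b₃, c₁, c₂, c₃` satisfying the system of equations of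
Lemmas 3.5 and 3.6. -/
theorem no_real_solutions :
    ¬ ∃ a₁ a₂ a₃ b₁ b₂ b₃ c₁ c₂ c₃ : ℝ,
      b₁ = a₂ ∧ c₂ = b₃ ∧ a₃ = c₁ ∧
      a₃ * b₂ - a₂ * b₃ = 0 ∧
      b₂ * c₁ - b₁ * c₂ = 0 ∧
      a₁ * c₂ - a₂ * c₁ = 0 ∧
      a₁ * b₃ - a₃ * b₁ = 0 ∧
      b₁ * c₃ - b₃ * c₁ = 0 ∧
      a₂ * c₃ - a₃ * c₂ = 0 ∧
      b₂ * c₃ - b₃ * c₂ = -1 ∧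
      a₁ * b₂ - a₂ * b₁ = -1 ∧
      a₁ * c₃ - a₃ * c₁ = -1 := by
  rintro ⟨a₁, a₂, a₃, b₁, b₂, b₃, c₁, c₂, c₃, rfl, rfl, rfl,
    h1, h2, h3, h4, h5, h6, h7, h8, h9⟩
  have hA : a₁ = c₃ := by linear_combination a₁ * h7 - c₃ * h8 + c₂ * h4 - b₁ * h6
  subst hA
  have hzero : b₁ * c₂ = 0 := by
    linear_combination b₁ * c₂ * h9 - a₁ * b₁ * h4 - a₃ * b₁ * h6
  rcases mul_eq_zero.mp hzero with h | h
  · subst h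
    have ha₃ : a₃ = 0 := by linear_combination a₃ * h8 - a₁ * h1
    nlinarith [h9, sq_nonneg a₁]
  · subst h
    have ha₃ : a₃ = 0 := by linear_combination a₃ * h7 - a₁ * h1
    nlinarith [h9, sq_nonneg a₁]
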